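/- arXiv:2104.07503 — 2 statements merged into one kernel-verified Lean document; each statement's English description precedes it below -/
import Mathlib

section
/- Let Λ be a finite subset of ℤ², let A be a finite alphabet partitioned by energy levels as above, and let Ω_Λ(x) be a nonempty finite set of admissible patches b ∈ A^Λ (those compatible with a boundary condition x). For the uniform probability measure on the set of all lifts {(b, tones) : b ∈ Ω_Λ(x)} in (A_N)^Λ, the probability of the set of lifts of a fixed a ∈ Ω_Λ(x) equals e^{−β_N H_Λ(a)} / ∑_{b ∈ Ω_Λ(x)} e^{−β_N H_Λ(b)}, where β_N = log(N)/ε₀. -/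
open Finset

/-- Uniform measure on tone-lifted patches projects to the Gibbs conditional measure at
inverse temperature `β_N = log N / ε₀`: for a nonempty finite set `Ω` of admissible patches
and `a ∈ Ω`, the proportion of lifts of `a` among all lifts of patches in `Ω` equals
`e^{−β_N H(a)} / ∑_{b ∈ Ω} e^{−β_N H(b)}`. -/
theorem uniform_lifts_project_to_gibbs {A : Type*} [Fintype A]
    {Λ : Type*} [Fintype Λ] [DecidableEq Λ]
    (S : Finset ℕ) (hS : S.Nonempty) (f : A → ℕ) (hf : ∀ b : A, f b ∈ S)
    (maxS : ℕ) (hmax : maxS = S.max' hS)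
    (ε₀ : ℝ) (hε : 0 < ε₀)
    (N : ℕ) (hN : 1 ≤ N)
    (βN : ℝ) (hβ : βN = Real.log N / ε₀)
    (H : (Λ → A) → ℝ) (hH : ∀ b : Λ → A, H b = ε₀ * ∑ z : Λ, (f (b z) : ℝ))
    (Ω : Finset (Λ → A)) (hΩ : Ω.Nonempty)
    (a : Λ → A) (ha : a ∈ Ω) :
    ((Fintype.card (∀ z : Λ, Fin (N ^ (maxS - f (a z))))) : ℝ) /
        (∑ b ∈ Ω, ((Fintype.card (∀ z : Λ, Fin (N ^ (maxS - f (b z))))) : ℝ))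
      = Real.exp (-βN * H a) / (∑ b ∈ Ω, Real.exp (-βN * H b)) := by

  have hN0 : (0:ℝ) < (N:ℝ) := by exact_mod_cast Nat.lt_of_lt_of_le Nat.zero_lt_one hN
  have hle : ∀ b : Λ → A, ∀ z : Λ, f (b z) ≤ maxS := fun b z => hmax ▸ S.le_max' _ (hf _)
  set C : ℝ := (N:ℝ) ^ (Fintype.card Λ * maxS) with hC
  have hCpos : 0 < C := pow_pos hN0 _
  have key : ∀ b : Λ → A, ((Fintype.card (∀ z : Λ, Fin (N ^ (maxS - f (b z))))) : ℝ)
      = C * Real.exp (-βN * H b) := by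
    intro b
    have hcard : Fintype.card (∀ z : Λ, Fin (N ^ (maxS - f (b z))))
        = N ^ (∑ z : Λ, (maxS - f (b z))) := by
      rw [Fintype.card_pi]
      simp [Finset.prod_pow_eq_pow_sum]
    have hsum : (∑ z : Λ, (maxS - f (b z))) + (∑ z : Λ, f (b z)) = Fintype.card Λ * maxS := by
      rw [← Finset.sum_add_distrib]
      have : ∀ z : Λ, (maxS - f (b z)) + f (b z) = maxS := fun z =>
        Nat.sub_add_cancel (hle b z)
      rw [Finset.sum_congr rfl (fun z _ => this z), Finset.sum_const, smul_eq_mul,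
        Nat.mul_comm, Fintype.card]
      exact Nat.mul_comm _ _
    have hexp : Real.exp (-βN * H b) = ((N:ℝ) ^ (∑ z : Λ, f (b z)))⁻¹ := by
      have h1 : -βN * H b = -((∑ z : Λ, f (b z) : ℕ) * Real.log N) := by
        rw [hβ, hH]
        push_cast
        field_simp
      rw [h1, Real.exp_neg, Real.exp_nat_mul, Real.exp_log hN0]
    rw [hcard, hexp]
    have : ((N:ℝ) ^ (∑ z : Λ, (maxS - f (b z)))) * ((N:ℝ) ^ (∑ z : Λ, f (b z))) = C := by
      rw [hC, ← pow_add, hsum]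
    push_cast
    field_simp
    linarith [this]
  rw [key a]
  have : ∀ b ∈ Ω, ((Fintype.card (∀ z : Λ, Fin (N ^ (maxS - f (b z))))) : ℝ)
      = C * Real.exp (-βN * H b) := fun b _ => key b
  rw [Finset.sum_congr rfl this, ← Finset.mul_sum,
    mul_div_mul_left _ _ (ne_of_gt hCpos)]
end

section
/- Suppose X ⊆ A^(ℤ²) and Y ⊆ B^(ℤ²) are subshifts and φ : Y → X is a surjective sliding block code with window radius r (i.e., φ(y)_z depends only on y restricted to z + Λ_r). If Y is strongly irreducible with gap ℓ, then X is strongly irreducible with gap ℓ + 4r. -/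
/-- `Z` is strongly irreducible with gap `ℓ`: any two admissible patches (restrictions of
points of `Z`) on finite sets at sup-distance at least `ℓ` occur jointly in some point of
`Z`. -/
def StronglyIrreducibleWithGap {C : Type*} (Z : Set ((ℤ × ℤ) → C)) (ℓ : ℕ) : Prop :=
  ∀ E F : Set (ℤ × ℤ), E.Finite → F.Finite →
    (∀ e ∈ E, ∀ f ∈ F, ℓ ≤ max (e.1 - f.1).natAbs (e.2 - f.2).natAbs) →
    ∀ x ∈ Z, ∀ y ∈ Z, ∃ w ∈ Z, (∀ e ∈ E, w e = x e) ∧ (∀ f ∈ F, w f = y f)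

/-- Strong irreducibility is inherited through a surjective sliding block code with window
radius `r`, with gap `ℓ + 4r`. -/
theorem strong_irreducibility_inherited
    {A B : Type*} [Fintype A] [Fintype B]
    (X : Set ((ℤ × ℤ) → A)) (Y : Set ((ℤ × ℤ) → B))
    (φ : ((ℤ × ℤ) → B) → ((ℤ × ℤ) → A)) (r ℓ : ℕ)
    (hlocal : ∀ y y' : (ℤ × ℤ) → B, ∀ z : ℤ × ℤ,
      (∀ s : ℤ × ℤ, s.1.natAbs ≤ r → s.2.natAbs ≤ r → y (z + s) = y' (z + s)) →
      φ y z = φ y' z)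
    (hequiv : ∀ y : (ℤ × ℤ) → B, ∀ w : ℤ × ℤ,
      φ (fun z => y (z + w)) = fun z => φ y (z + w))
    (hmaps : ∀ y ∈ Y, φ y ∈ X)
    (hsurj : φ '' Y = X)
    (hY : StronglyIrreducibleWithGap Y ℓ) :
    StronglyIrreducibleWithGap X (ℓ + 4 * r) := by
  intro E F hE hF hgap x hx y hy
  rw [← hsurj] at hx hy
  obtain ⟨yx, hyxY, hyx⟩ := hx
  obtain ⟨yy, hyyY, hyy⟩ := hy
  set box : Set (ℤ × ℤ) := {s | s.1.natAbs ≤ r ∧ s.2.natAbs ≤ r} with hboxdef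
  have hbox : box.Finite := by
    apply Set.Finite.subset (Set.finite_Icc ((-(r : ℤ), -(r : ℤ))) (((r : ℤ), (r : ℤ))))
    rintro ⟨s1, s2⟩ ⟨h1, h2⟩
    simp only [Set.mem_Icc, Prod.mk_le_mk]
    omega
  set E' := ⋃ e ∈ E, (fun s => e + s) '' box with hE'def
  set F' := ⋃ f ∈ F, (fun s => f + s) '' box with hF'def
  have hE' : E'.Finite := hE.biUnion fun e _ => hbox.image _
  have hF' : F'.Finite := hF.biUnion fun f _ => hbox.image _
  have hgap' : ∀ z ∈ E', ∀ z' ∈ F', ℓ ≤ max (z.1 - z'.1).natAbs (z.2 - z'.2).natAbs := by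
    intro z hz z' hz'
    simp only [hE'def, hF'def, Set.mem_iUnion, Set.mem_image] at hz hz'
    obtain ⟨e, he, s, hs, rfl⟩ := hz
    obtain ⟨f, hf, t, ht, rfl⟩ := hz'
    have := hgap e he f hf
    rw [le_max_iff] at this ⊢
    obtain ⟨hs1, hs2⟩ := hs
    obtain ⟨ht1, ht2⟩ := ht
    rcases this with h | h
    · left; simp only [Prod.fst_add]; omega
    · right; simp only [Prod.snd_add]; omega
  obtain ⟨w', hw'Y, hwE, hwF⟩ := hY E' F' hE' hF' hgap' yx hyxY yy hyyY
  refine ⟨φ w', hmaps w' hw'Y, ?_, ?_⟩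
  · intro e he
    rw [← hyx]
    apply hlocal
    intro s hs1 hs2
    apply hwE
    simp only [hE'def, Set.mem_iUnion, Set.mem_image]
    exact ⟨e, he, s, ⟨hs1, hs2⟩, rfl⟩
  · intro f hf
    rw [← hyy]
    apply hlocal
    intro s hs1 hs2
    apply hwF
    simp only [hF'def, Set.mem_iUnion, Set.mem_image]
    exact ⟨f, hf, s, ⟨hs1, hs2⟩, rfl⟩
end
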